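/- arXiv:1306.5331 — 13 statements merged into one kernel-verified Lean document; each statement's English description precedes it below -/
import Mathlib

section
/- Let X be a Banach space, T : X → X a bounded linear operator, x, y ∈ X, d > 0, and let (t_k) be a strictly increasing sequence of positive reals with t_k → ∞. If for every k the vector t_k·y lies in the coarse orbit O(t_k·x, T, d) (i.e., there exists n ≥ 0 with ‖T^n(t_k x) − t_k y‖ < d), then y lies in the closure of the orbit O(x, T) = {T^n x : n ≥ 0}. -/
open Filter Topology

variable {X : Type*} [NormedAddCommGroup X] [NormedSpace ℂ X]

/-- The orbit of `x` under `T`. -/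
def orbitSet (T : X →L[ℂ] X) (x : X) : Set X := Set.range fun n : ℕ => (T ^ n) x

/-- The coarse orbit of `x` under `T` with respect to `d`. -/
def coarseOrbit (T : X →L[ℂ] X) (x : X) (d : ℝ) : Set X :=
  {y | ∃ n : ℕ, ‖(T ^ n) x - y‖ < d}

/-- The extended (prolongational) limit set `J(x,T)`. -/
def jSet (T : X →L[ℂ] X) (x : X) : Set X :=
  {y | ∃ k : ℕ → ℕ, StrictMono k ∧ (∀ n, 0 < k n) ∧
    ∃ u : ℕ → X, Tendsto u atTop (𝓝 x) ∧
      Tendsto (fun n => (T ^ k n) (u n)) atTop (𝓝 y)}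

/-- The coarse extended limit set `J(x,T,d)`. -/
def jCoarse (T : X →L[ℂ] X) (x : X) (d : ℝ) : Set X :=
  {y | ∃ k : ℕ → ℕ, StrictMono k ∧ (∀ n, 0 < k n) ∧
    ∃ u : ℕ → X, Tendsto u atTop (𝓝 x) ∧ ∀ n, ‖(T ^ k n) (u n) - y‖ < d}

/-- The extended mixing limit set `J^{mix}(x,T)`. -/
def jMix (T : X →L[ℂ] X) (x : X) : Set X :=
  {y | ∃ u : ℕ → X, Tendsto u atTop (𝓝 x) ∧
    Tendsto (fun n => (T ^ n) (u n)) atTop (𝓝 y)}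

/-- The coarse extended mixing limit set `J^{mix}(x,T,d)`. -/
def jMixCoarse (T : X →L[ℂ] X) (x : X) (d : ℝ) : Set X :=
  {y | ∃ u : ℕ → X, Tendsto u atTop (𝓝 x) ∧ ∀ n, ‖(T ^ n) (u n) - y‖ < d}

/-- The prolongation `D(x,T) = O(x,T) ∪ J(x,T)`. -/
def dSet (T : X →L[ℂ] X) (x : X) : Set X := orbitSet T x ∪ jSet T x

/-- The coarse prolongation `D(x,T,d) = O(x,T,d) ∪ J(x,T,d)`. -/
def dCoarse (T : X →L[ℂ] X) (x : X) (d : ℝ) : Set X :=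
  coarseOrbit T x d ∪ jCoarse T x d

/-- The coarse mixing prolongation `D^{mix}(x,T,d)`. -/
def dMixCoarse (T : X →L[ℂ] X) (x : X) (d : ℝ) : Set X :=
  coarseOrbit T x d ∪ jMixCoarse T x d

/-- An open cone: a nonempty open set invariant under positive scalar multiplication. -/
def IsOpenCone (C : Set X) : Prop :=
  IsOpen C ∧ C.Nonempty ∧ ∀ x ∈ C, ∀ r : ℝ, 0 < r → (r : ℂ) • x ∈ C

theorem coarse_orbit_scaling_to_orbit_closure [CompleteSpace X]
    (T : X →L[ℂ] X) (x y : X) (d : ℝ) (hd : 0 < d)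
    (t : ℕ → ℝ) (ht : StrictMono t) (htpos : ∀ k, 0 < t k)
    (htinf : Tendsto t atTop atTop)
    (h : ∀ k, ((t k : ℂ)) • y ∈ coarseOrbit T (((t k : ℂ)) • x) d) :
    y ∈ closure (orbitSet T x) := by
  rw [Metric.mem_closure_iff]
  intro ε hε
  obtain ⟨k, hk⟩ := (htinf.eventually_ge_atTop (d / ε + 1)).exists
  obtain ⟨n, hn⟩ := h k
  refine ⟨(T ^ n) x, ⟨n, rfl⟩, ?_⟩
  have htk : d / ε < t k := lt_of_lt_of_le (lt_add_of_pos_right _ one_pos) hk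
  have h1 : (T ^ n) ((t k : ℂ) • x) - (t k : ℂ) • y = (t k : ℂ) • ((T ^ n) x - y) := by
    rw [map_smul, smul_sub]
  rw [h1] at hn
  rw [norm_smul] at hn
  simp only [Complex.norm_real, Real.norm_eq_abs, abs_of_pos (htpos k)] at hn
  have h2 : ‖(T ^ n) x - y‖ < d / t k := by
    rw [lt_div_iff₀ (htpos k), mul_comm]; exact hn
  have h3 : d / t k < ε := by
    rw [div_lt_iff₀ (htpos k)]
    have := (div_lt_iff₀ hε).mp htk
    linarith [mul_pos hε (sub_pos.mpr htk)]
  rw [dist_eq_norm, ← norm_neg, neg_sub]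
  linarith
end

section
/- Let X be a Banach space, T : X → X a bounded linear operator, x, y ∈ X, d > 0, and (t_k) a strictly increasing sequence of positive reals tending to infinity. If for every k, t_k·y ∈ J(t_k·x, T, d), then y ∈ J(x,T). -/
open Filter Topology

variable {X : Type*} [NormedAddCommGroup X] [NormedSpace ℂ X]

theorem coarse_jSet_scaling_to_jSet [CompleteSpace X]
    (T : X →L[ℂ] X) (x y : X) (d : ℝ) (hd : 0 < d)
    (t : ℕ → ℝ) (ht : StrictMono t) (htpos : ∀ k, 0 < t k)
    (htinf : Tendsto t atTop atTop)
    (h : ∀ k, ((t k : ℂ)) • y ∈ jCoarse T (((t k : ℂ)) • x) d) :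
    y ∈ jSet T x := by
  have key : ∀ k M : ℕ, ∃ p : ℕ × X, M < p.1 ∧ ‖p.2 - x‖ < 1/(k+1) ∧
      ‖(T ^ p.1) p.2 - y‖ < d / t k := by
    intro k M
    obtain ⟨κ, hκ, hκpos, u, hu, hb⟩ := h k
    have htk := htpos k
    have hε : 0 < t k / (k+1) := by positivity
    obtain ⟨N, hN⟩ := (Metric.tendsto_atTop.mp hu) (t k / (k+1)) hε
    set n := max N (M+1) with hn
    have hnorm : ‖((t k : ℂ))⁻¹‖ = (t k)⁻¹ := by
      rw [norm_inv, Complex.norm_real, Real.norm_eq_abs, abs_of_pos htk]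
    refine ⟨⟨κ n, ((t k : ℂ))⁻¹ • u n⟩, ?_, ?_, ?_⟩
    · calc M < M + 1 := Nat.lt_succ_self M
        _ ≤ n := le_max_right _ _
        _ ≤ κ n := hκ.le_apply
    · have h1 := hN n (le_max_left _ _)
      rw [dist_eq_norm] at h1
      have heq : ((t k : ℂ))⁻¹ • u n - x = ((t k : ℂ))⁻¹ • (u n - ((t k : ℂ)) • x) := by
        rw [smul_sub, inv_smul_smul₀ (by exact_mod_cast htk.ne')]
      rw [heq, norm_smul, hnorm]
      rw [inv_mul_lt_iff₀ htk]
      calc ‖u n - (↑(t k) : ℂ) • x‖ < t k / (k+1) := h1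
        _ = t k * (1/(k+1)) := by ring
    · have h2 := hb n
      have heq : (T ^ κ n) (((t k : ℂ))⁻¹ • u n) - y
          = ((t k : ℂ))⁻¹ • ((T ^ κ n) (u n) - ((t k : ℂ)) • y) := by
        rw [map_smul, smul_sub, inv_smul_smul₀ (by exact_mod_cast htk.ne')]
      rw [heq, norm_smul, hnorm, inv_mul_lt_iff₀ htk]
      calc ‖(T ^ κ n) (u n) - (↑(t k) : ℂ) • y‖ < d := h2
        _ = t k * (d / t k) := by field_simp
  choose p hm hv1 hv2 using key
  set g : ℕ → ℕ := fun k => Nat.rec 0 (fun k ih => (p k ih).1) k with hg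
  have hgsucc : ∀ k, g (k+1) = (p k (g k)).1 := fun k => rfl
  set e : ℕ → ℕ := fun k => g (k+1) with he
  set w : ℕ → X := fun k => (p k (g k)).2 with hw
  have hlt : ∀ k, g k < g (k+1) := by
    intro k; rw [hgsucc]; exact hm k (g k)
  refine ⟨e, strictMono_nat_of_lt_succ (fun k => ?_), fun k => ?_, w, ?_, ?_⟩
  · exact hlt (k+1)
  · exact lt_of_le_of_lt (Nat.zero_le _) (hlt k)
  · rw [tendsto_iff_norm_sub_tendsto_zero]
    apply squeeze_zero (fun k => norm_nonneg _) (fun k => (hv1 k (g k)).le)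
    exact tendsto_one_div_add_atTop_nhds_zero_nat
  · rw [tendsto_iff_norm_sub_tendsto_zero]
    apply squeeze_zero (fun k => norm_nonneg _) (fun k => (hv2 k (g k)).le)
    exact Tendsto.div_atTop tendsto_const_nhds htinf
end

section
/- Let X be a Banach space, T : X → X a bounded linear operator, x, y ∈ X, d > 0, and (t_k) a strictly increasing sequence of positive reals tending to infinity. If for every k, t_k·y ∈ J^{mix}(t_k·x, T, d), then y ∈ J^{mix}(x,T). -/
open Filter Topology

variable {X : Type*} [NormedAddCommGroup X] [NormedSpace ℂ X]

theorem coarse_jMix_scaling_to_jMix [CompleteSpace X]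
    (T : X →L[ℂ] X) (x y : X) (d : ℝ) (hd : 0 < d)
    (t : ℕ → ℝ) (ht : StrictMono t) (htpos : ∀ k, 0 < t k)
    (htinf : Tendsto t atTop atTop)
    (h : ∀ k, ((t k : ℂ)) • y ∈ jMixCoarse T (((t k : ℂ)) • x) d) :
    y ∈ jMix T x := by
  -- rescale the witnesses
  have hv : ∀ k, ∃ v : ℕ → X, Tendsto v atTop (𝓝 x) ∧
      ∀ n, ‖(T ^ n) (v n) - y‖ < d / t k := by
    intro k
    obtain ⟨u, hu, hub⟩ := h k
    have htk : (t k : ℂ) ≠ 0 := by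
      exact_mod_cast (ne_of_gt (htpos k))
    refine ⟨fun n => ((t k : ℂ))⁻¹ • u n, ?_, ?_⟩
    · have h2 : ((t k : ℂ))⁻¹ • ((t k : ℂ) • x) = x := by
        rw [smul_smul, inv_mul_cancel₀ htk, one_smul]
      have := hu.const_smul ((t k : ℂ))⁻¹
      rwa [h2] at this
    · intro n
      have hmaps : (T ^ n) (((t k : ℂ))⁻¹ • u n) - y
          = ((t k : ℂ))⁻¹ • ((T ^ n) (u n) - (t k : ℂ) • y) := by
        rw [map_smul, smul_sub, smul_smul, inv_mul_cancel₀ htk, one_smul]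
      rw [hmaps, norm_smul]
      have h1 : ‖((t k : ℂ))⁻¹‖ = (t k)⁻¹ := by
        rw [norm_inv]
        simp [Complex.norm_real, abs_of_pos (htpos k)]
      rw [h1, div_eq_inv_mul]
      exact mul_lt_mul_of_pos_left (hub n) (inv_pos.mpr (htpos k))
  choose v hv1 hv2 using hv
  -- choose cutoffs
  have hN : ∀ k : ℕ, ∃ N, k ≤ N ∧ ∀ n ≥ N, ‖v k n - x‖ < 1 / (k + 1) := by
    intro k
    have hpos : (0 : ℝ) < 1 / (k + 1) := by positivity
    obtain ⟨N, hNs⟩ := Metric.tendsto_atTop.mp (hv1 k) _ hpos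
    refine ⟨max k N, le_max_left _ _, fun n hn => ?_⟩
    have := hNs n (le_trans (le_max_right _ _) hn)
    simpa [dist_eq_norm] using this
  choose N hNk hNs using hN
  set kOf : ℕ → ℕ := fun n => Nat.findGreatest (fun k => N k ≤ n) n with hkOf
  have hk1 : ∀ n, N 0 ≤ n → N (kOf n) ≤ n := fun n hn =>
    Nat.findGreatest_spec (P := fun k => N k ≤ n) (Nat.zero_le n) hn
  have hk2 : ∀ k n, N k ≤ n → k ≤ kOf n := fun k n hn =>
    Nat.le_findGreatest (le_trans (hNk k) hn) hn
  have hkTop : Tendsto kOf atTop atTop := by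
    refine tendsto_atTop.mpr fun k => ?_
    filter_upwards [eventually_ge_atTop (N k)] with n hn
    exact hk2 k n hn
  refine ⟨fun n => v (kOf n) n, ?_, ?_⟩
  · rw [tendsto_iff_norm_sub_tendsto_zero]
    have hg : Tendsto (fun n => 1 / ((kOf n : ℝ) + 1)) atTop (𝓝 0) :=
      tendsto_one_div_add_atTop_nhds_zero_nat.comp hkTop
    refine squeeze_zero' (Eventually.of_forall fun n => norm_nonneg _) ?_ hg
    filter_upwards [eventually_ge_atTop (N 0)] with n hn
    exact le_of_lt (hNs (kOf n) n (hk1 n hn))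
  · rw [tendsto_iff_norm_sub_tendsto_zero]
    have hg : Tendsto (fun n => d / t (kOf n)) atTop (𝓝 0) :=
      Tendsto.div_atTop tendsto_const_nhds (htinf.comp hkTop)
    refine squeeze_zero' (Eventually.of_forall fun n => norm_nonneg _) ?_ hg
    exact Eventually.of_forall fun n => le_of_lt (hv2 (kOf n) n)
end

section
/- Let T : X → X be a bounded linear operator on an infinite dimensional Banach space X whose orbit O(x,T) is coarsely dense on an open cone C with respect to d > 0 (i.e., C ⊆ O(x,T,d)). Then x is a cyclic vector for T: the closed linear span of O(x,T) is all of X. -/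
open Filter Topology

variable {X : Type*} [NormedAddCommGroup X] [NormedSpace ℂ X]

theorem cyclic_of_coarsely_dense_on_cone [CompleteSpace X]
    (hinf : ¬ FiniteDimensional ℂ X)
    (T : X →L[ℂ] X) (x : X) (d : ℝ) (hd : 0 < d)
    (C : Set X) (hC : IsOpenCone C) (hdense : C ⊆ coarseOrbit T x d) :
    Dense (Submodule.span ℂ (orbitSet T x) : Set X) := by
  set M := (Submodule.span ℂ (orbitSet T x)).topologicalClosure with hM
  have hCM : C ⊆ (M : Set X) := by
    intro c hc
    have hmem : c ∈ closure (Submodule.span ℂ (orbitSet T x) : Set X) := by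
      rw [Metric.mem_closure_iff]
      intro ε hε
      obtain ⟨r, hr⟩ := exists_nat_gt (d / ε)
      set R : ℝ := (r : ℝ) + 1 with hR
      have hr0 : (0 : ℝ) < R := by positivity
      have hrc : (R : ℂ) • c ∈ C := hC.2.2 c hc R hr0
      obtain ⟨n, hn⟩ := hdense hrc
      refine ⟨(R : ℂ)⁻¹ • (T ^ n) x, ?_, ?_⟩
      · exact Submodule.smul_mem _ _ (Submodule.subset_span ⟨n, rfl⟩)
      · have heq : c = (R : ℂ)⁻¹ • ((R : ℂ) • c) := by
          rw [smul_smul, inv_mul_cancel₀ (by exact_mod_cast hr0.ne'), one_smul]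
        rw [dist_eq_norm, heq, ← smul_sub, norm_smul]
        have h1 : ‖((R : ℝ) : ℂ)⁻¹‖ = R⁻¹ := by
          rw [norm_inv, Complex.norm_real, Real.norm_of_nonneg hr0.le]
        rw [h1]
        have h3 : R⁻¹ * ‖(R : ℂ) • c - (T ^ n) x‖ ≤ R⁻¹ * d :=
          mul_le_mul_of_nonneg_left (by rw [norm_sub_rev]; exact hn.le) (by positivity)
        refine lt_of_le_of_lt h3 ?_
        rw [inv_mul_lt_iff₀ hr0]
        have hRε : d / ε < R := hr.trans (by simp [hR])
        calc d = (d / ε) * ε := by field_simp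
        _ < R * ε := mul_lt_mul_of_pos_right hRε hε
      -- done
    exact hmem
  have hMtop : M = ⊤ := by
    apply Submodule.eq_top_of_nonempty_interior'
    obtain ⟨c, hc⟩ := hC.2.1
    exact ⟨c, mem_interior_iff_mem_nhds.2 (Filter.mem_of_superset (hC.1.mem_nhds hc) hCM)⟩
  have : Dense (M : Set X) := by
    rw [hMtop]; simp [dense_iff_closure_eq]
  have hcl : closure (Submodule.span ℂ (orbitSet T x) : Set X) = (M : Set X) := rfl
  rw [dense_iff_closure_eq, ← closure_closure, hcl]
  exact this.closure_eq
end

section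
/- Let T : X → X be a bounded linear operator on an infinite dimensional Banach space with C ⊆ O(x,T,d) for an open cone C and d > 0. If y ∈ C and the open ball B(y,3d) is contained in C, then the set O(x,T) ∩ B(y,3d) is infinite. -/
open Filter Topology

variable {X : Type*} [NormedAddCommGroup X] [NormedSpace ℂ X]

/-!
If the orbit met `B(y, 3d)` in only finitely many points, the coarse density of the orbit would
cover `B(y, 2d)` by finitely many balls of radius `d` centred at those points. Riesz's lemma,
applied to the finite-dimensional span of the centres (translated by `-y`), yields a point of
`B(y, 2d)` at distance at least `d` from every centre, so the space must be finite-dimensional.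
-/

open Metric

theorem finiteDimensional_of_ball_subset_biUnion_ball {𝕜 E : Type*} [RCLike 𝕜]
    [NormedAddCommGroup E] [NormedSpace 𝕜 E] {s : Set E} (hs : s.Finite) {y : E} {r : ℝ}
    (hr : 0 < r) (hcover : ball y (2 * r) ⊆ ⋃ p ∈ s, ball p r) : FiniteDimensional 𝕜 E := by
  by_contra hinf
  set F := Submodule.span 𝕜 ((· - y) '' s)
  have hF : ∃ v : E, v ∉ F := by
    by_contra! hall
    rw [← Submodule.eq_top_iff'] at hall
    exact hinf (Module.finite_def.2 (hall ▸ Submodule.fg_span (hs.image _)))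
  have : FiniteDimensional 𝕜 F := FiniteDimensional.span_of_finite 𝕜 (hs.image _)
  -- Any Riesz constant `R < 2` works: it keeps `y + r • v` inside `B(y, 2r)`.
  obtain ⟨v, hv, hvF⟩ := riesz_lemma_of_norm_lt (c := (3 / 2 : 𝕜)) (R := 7 / 4)
    (by norm_num) (by norm_num) F.closed_of_finiteDimensional hF
  have hz : y + (r : 𝕜) • v ∈ ball y (2 * r) := by
    rw [mem_ball, dist_self_add_left, norm_smul, RCLike.norm_ofReal, abs_of_pos hr]
    nlinarith
  obtain ⟨p, hp, hzp⟩ := Set.mem_iUnion₂.1 (hcover hz)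
  have hpF : (r⁻¹ : 𝕜) • (p - y) ∈ F :=
    F.smul_mem _ (Submodule.subset_span ⟨p, hp, rfl⟩)
  have hfar : r ≤ ‖y + (r : 𝕜) • v - p‖ := by
    calc r = r * 1 := (mul_one r).symm
      _ ≤ r * ‖v - (r⁻¹ : 𝕜) • (p - y)‖ := by gcongr; exact hvF _ hpF
      _ = ‖(r : 𝕜) • (v - (r⁻¹ : 𝕜) • (p - y))‖ := by
        rw [norm_smul, RCLike.norm_ofReal, abs_of_pos hr]
      _ = ‖y + (r : 𝕜) • v - p‖ := by
        rw [smul_sub, smul_inv_smul₀ (by exact_mod_cast hr.ne')]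
        congr 1; abel
  exact (mem_ball.1 hzp).not_ge (by rw [dist_eq_norm]; exact hfar)

theorem Metric.ball_subset_biUnion_inter_ball {α : Type*} [PseudoMetricSpace α] {s : Set α}
    {y : α} {r d : ℝ} (hd : 0 ≤ d) (hcover : ball y (r + d) ⊆ ⋃ p ∈ s, ball p d) :
    ball y r ⊆ ⋃ p ∈ s ∩ ball y (r + d), ball p d := by
  intro z hz
  obtain ⟨p, hp, hzp⟩ := Set.mem_iUnion₂.1 (hcover (ball_subset_ball (by linarith) hz))
  refine Set.mem_iUnion₂.2 ⟨p, ⟨hp, ?_⟩, hzp⟩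
  rw [mem_ball] at hz hzp ⊢
  linarith [dist_triangle_left p y z]

theorem coarseOrbit_eq_biUnion_ball (T : X →L[ℂ] X) (x : X) (d : ℝ) :
    coarseOrbit T x d = ⋃ p ∈ orbitSet T x, ball p d := by
  ext z
  simp [coarseOrbit, orbitSet, dist_comm z, dist_eq_norm]

theorem orbit_inter_ball_infinite_general
    (hinf : ¬ FiniteDimensional ℂ X)
    (T : X →L[ℂ] X) (x : X) (d : ℝ) (hd : 0 < d)
    (C : Set X) (hdense : C ⊆ coarseOrbit T x d)
    (y : X) (hball : Metric.ball y (3 * d) ⊆ C) :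
    (orbitSet T x ∩ Metric.ball y (3 * d)).Infinite := by
  by_contra hfin
  refine hinf (finiteDimensional_of_ball_subset_biUnion_ball (y := y)
    (Set.not_infinite.1 hfin) hd ?_)
  rw [show 3 * d = 2 * d + d by ring] at hball ⊢
  exact ball_subset_biUnion_inter_ball hd.le
    (coarseOrbit_eq_biUnion_ball T x d ▸ hball.trans hdense)

theorem orbit_inter_ball_infinite [CompleteSpace X]
    (hinf : ¬ FiniteDimensional ℂ X)
    (T : X →L[ℂ] X) (x : X) (d : ℝ) (hd : 0 < d)
    (C : Set X) (hC : IsOpenCone C) (hdense : C ⊆ coarseOrbit T x d)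
    (y : X) (hy : y ∈ C) (hball : Metric.ball y (3 * d) ⊆ C) :
    (orbitSet T x ∩ Metric.ball y (3 * d)).Infinite :=
  orbit_inter_ball_infinite_general hinf T x d hd C hdense y hball
end

section
/- Let T : X → X be a bounded linear operator on an infinite dimensional Banach space with C ⊆ O(x,T,d) for an open cone C and d > 0. Then T has dense range, and every power T^n has dense range. -/
open Filter Topology

variable {X : Type*} [NormedAddCommGroup X] [NormedSpace ℂ X]

/-!
Fix `n` and let `S` be the range of `T ^ n`. The orbit points `T ^ m x` with `m ≥ n` lie in `S`,
so the orbit lies in a bounded set union `S`, and `C` lies in the `d`-thickening of that union.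
The image of this thickening in the seminormed quotient `X ⧸ S` is bounded, whereas for `c ∈ C`
the images of the ray `r • c ⊆ C` have norm `r * ‖c mod S‖`, which is unbounded unless
`c ∈ closure S`. So `C ⊆ closure S`, and a subspace whose closure has interior is dense.
-/

open Metric Bornology

theorem mem_closure_of_forall_smul_mem_thickening {𝕜 E : Type*} [NormedField 𝕜]
    [SeminormedAddCommGroup E] [NormedSpace 𝕜 E] {S : Submodule 𝕜 E} {B : Set E}
    (hB : IsBounded B) {d : ℝ} {c : E}
    (h : ∀ R : ℝ, ∃ a : 𝕜, R < ‖a‖ ∧ a • c ∈ thickening d (B ∪ S)) :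
    c ∈ closure (S : Set E) := by
  obtain ⟨R₀, hR₀, hB⟩ := hB.exists_pos_norm_le
  have hbound : ∀ y ∈ thickening d (B ∪ S), ‖S.mkQ y‖ < R₀ + d := by
    rintro y hy
    obtain ⟨z, hz, hyz⟩ := mem_thickening_iff.1 hy
    have hqz : ‖S.mkQ z‖ ≤ R₀ := by
      rcases hz with hz | hz
      · exact (Submodule.Quotient.norm_mk_le S z).trans (hB z hz)
      · rw [Submodule.mkQ_apply, (Submodule.Quotient.mk_eq_zero S).2 hz, norm_zero]
        exact hR₀.le
    calc ‖S.mkQ y‖ ≤ ‖S.mkQ z‖ + ‖S.mkQ (y - z)‖ := by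
          simpa [map_sub] using norm_le_norm_add_norm_sub' (S.mkQ y) (S.mkQ z)
      _ < R₀ + d := add_lt_add_of_le_of_lt hqz <|
          (Submodule.Quotient.norm_mk_le S _).trans_lt (by rwa [← dist_eq_norm])
  have hc : ‖S.mkQ c‖ = 0 := by
    by_contra hc
    have hpos : 0 < ‖S.mkQ c‖ := (norm_nonneg _).lt_of_ne' hc
    obtain ⟨a, ha, hac⟩ := h ((R₀ + d) / ‖S.mkQ c‖)
    have hac_bound := hbound _ hac
    rw [map_smul, norm_smul] at hac_bound
    rw [div_lt_iff₀ hpos] at ha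
    linarith
  exact QuotientAddGroup.norm_mk_eq_zero_iff_mem_closure.1 hc

theorem coarseOrbit_eq_thickening (T : X →L[ℂ] X) (x : X) (d : ℝ) :
    coarseOrbit T x d = thickening d (orbitSet T x) := by
  ext y
  simp only [coarseOrbit, orbitSet, mem_thickening_iff, Set.mem_ofPred_eq, Set.exists_range_iff,
    dist_comm y, dist_eq_norm]

theorem orbitSet_subset_image_Iio_union_range (T : X →L[ℂ] X) (x : X) (n : ℕ) :
    orbitSet T x ⊆ (fun m => (T ^ m) x) '' Set.Iio n ∪ Set.range (T ^ n) := by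
  rintro _ ⟨m, rfl⟩
  rcases lt_or_ge m n with hmn | hnm
  · exact Or.inl ⟨m, hmn, rfl⟩
  · refine Or.inr ⟨(T ^ (m - n)) x, ?_⟩
    rw [← mul_apply_eq_comp, ← pow_add, Nat.add_sub_cancel' hnm]

theorem IsOpenCone.subset_closure_of_subset_thickening {C : Set X} (hC : IsOpenCone C)
    {S : Submodule ℂ X} {B : Set X} (hB : IsBounded B) {d : ℝ}
    (hCS : C ⊆ thickening d (B ∪ S)) : C ⊆ closure (S : Set X) := by
  intro c hc
  refine mem_closure_of_forall_smul_mem_thickening hB fun R => ⟨(|R| + 1 : ℝ), ?_, hCS ?_⟩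
  · rw [Complex.norm_real, Real.norm_of_nonneg (by positivity)]
    linarith [le_abs_self R]
  · exact hC.2.2 c hc _ (by positivity)

theorem IsOpenCone.dense_of_subset_closure {C : Set X} (hC : IsOpenCone C) {S : Submodule ℂ X}
    (hCS : C ⊆ closure (S : Set X)) : Dense (S : Set X) := by
  rw [Submodule.dense_iff_topologicalClosure_eq_top]
  obtain ⟨hopen, ⟨c, hc⟩, -⟩ := hC
  exact S.topologicalClosure.eq_top_of_nonempty_interior' ⟨c, interior_maximal hCS hopen hc⟩

theorem denseRange_pow_of_isOpenCone_subset_coarseOrbit {T : X →L[ℂ] X} {x : X} {d : ℝ}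
    {C : Set X} (hC : IsOpenCone C) (hdense : C ⊆ coarseOrbit T x d) (n : ℕ) :
    DenseRange (T ^ n) := by
  have hB : IsBounded ((fun m => (T ^ m) x) '' Set.Iio n) :=
    ((Set.finite_Iio n).image _).isBounded
  have hsub : C ⊆ thickening d ((fun m => (T ^ m) x) '' Set.Iio n ∪
      (LinearMap.range (T ^ n).toLinearMap : Set X)) := by
    rw [LinearMap.coe_range, ContinuousLinearMap.coe_coe]
    calc C ⊆ coarseOrbit T x d := hdense
      _ = thickening d (orbitSet T x) := coarseOrbit_eq_thickening T x d
      _ ⊆ _ := thickening_subset_of_subset d (orbitSet_subset_image_Iio_union_range T x n)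
  have hrange := hC.dense_of_subset_closure (hC.subset_closure_of_subset_thickening hB hsub)
  rwa [LinearMap.coe_range, ContinuousLinearMap.coe_coe] at hrange

theorem denseRange_of_coarsely_dense_on_cone_general
    (T : X →L[ℂ] X) (x : X) (d : ℝ)
    (C : Set X) (hC : IsOpenCone C) (hdense : C ⊆ coarseOrbit T x d) :
    DenseRange T ∧ ∀ n : ℕ, DenseRange (T ^ n) :=
  have h := denseRange_pow_of_isOpenCone_subset_coarseOrbit hC hdense
  ⟨by simpa using h 1, h⟩

theorem denseRange_of_coarsely_dense_on_cone [CompleteSpace X]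
    (hinf : ¬ FiniteDimensional ℂ X)
    (T : X →L[ℂ] X) (x : X) (d : ℝ) (hd : 0 < d)
    (C : Set X) (hC : IsOpenCone C) (hdense : C ⊆ coarseOrbit T x d) :
    DenseRange T ∧ ∀ n : ℕ, DenseRange (T ^ n) :=
  denseRange_of_coarsely_dense_on_cone_general T x d C hC hdense
end

section
/- Let X be a completely metrizable space and T : X → X continuous. Suppose there is a countable set A and an open ball B(y,ε) such that x ∈ D(w,T) for every x ∈ A and every w ∈ B(y,ε). Then there is a dense G_δ subset E of the closure of B(y,ε) such that closure(A) ⊆ closure(O(z,T)) for every z ∈ E. -/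
open Filter Topology

/-- The orbit of `x` under iteration of a map `T`. -/
def orbitMap {X : Type*} (T : X → X) (x : X) : Set X := Set.range fun n : ℕ => T^[n] x

/-- The extended (prolongational) limit set `J(w,T)` of a continuous map. -/
def jMap {X : Type*} [TopologicalSpace X] (T : X → X) (w : X) : Set X :=
  {y | ∃ k : ℕ → ℕ, StrictMono k ∧ (∀ n, 0 < k n) ∧
    ∃ u : ℕ → X, Tendsto u atTop (𝓝 w) ∧
      Tendsto (fun n => T^[k n] (u n)) atTop (𝓝 y)}

/-- The prolongation `D(w,T) = O(w,T) ∪ J(w,T)`. -/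
def dMap {X : Type*} [TopologicalSpace X] (T : X → X) (w : X) : Set X :=
  orbitMap T w ∪ jMap T w

theorem dense_Gdelta_of_dSet_condition {X : Type*} [MetricSpace X] [CompleteSpace X]
    (T : X → X) (hT : Continuous T)
    (A : Set X) (hA : A.Countable) (y : X) (ε : ℝ) (hε : 0 < ε)
    (h : ∀ x ∈ A, ∀ w ∈ Metric.ball y ε, x ∈ dMap T w) :
    ∃ E ⊆ closure (Metric.ball y ε), IsGδ E ∧
      closure (Metric.ball y ε) ⊆ closure E ∧
      ∀ z ∈ E, closure A ⊆ closure (orbitMap T z) := by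
  classical
  set B := Metric.ball y ε with hB
  set U : X → ℕ → Set X := fun x m =>
    ⋃ n : ℕ, (fun z => T^[n] z) ⁻¹' Metric.ball x (1 / (m + 1)) with hU
  have hUopen : ∀ x m, IsOpen (U x m) := fun x m =>
    isOpen_iUnion fun n => Metric.isOpen_ball.preimage (hT.iterate n)
  -- density step
  have key : ∀ x ∈ A, ∀ m : ℕ, ∀ w ∈ B, ∀ δ > (0:ℝ), ∃ v ∈ B ∩ U x m, dist v w < δ := by
    intro x hx m w hw δ hδ
    have hpos : (0:ℝ) < 1 / (m + 1) := by positivity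
    rcases h x hx w hw with hO | hJ
    · rcases hO with ⟨n, rfl⟩
      refine ⟨w, ⟨hw, Set.mem_iUnion.2 ⟨n, ?_⟩⟩, by simpa using hδ⟩
      simpa [Metric.mem_ball] using hpos
    · obtain ⟨k, _, _, u, hu, huT⟩ := hJ
      have h1 : ∀ᶠ n in atTop, u n ∈ B := hu (Metric.isOpen_ball.mem_nhds hw)
      have h2 : ∀ᶠ n in atTop, dist (u n) w < δ :=
        Metric.tendsto_nhds.mp hu δ hδ
      have h3 : ∀ᶠ n in atTop, dist (T^[k n] (u n)) x < 1 / (m + 1) :=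
        Metric.tendsto_nhds.mp huT _ hpos
      obtain ⟨n, hn1, hn2, hn3⟩ := (h1.and (h2.and h3)).exists
      exact ⟨u n, ⟨hn1, Set.mem_iUnion.2 ⟨k n, hn3⟩⟩, hn2⟩
  set E : Set X := closure B ∩ ⋂ x ∈ A, ⋂ m : ℕ, U x m with hE
  have hEsub : E ⊆ closure B := Set.inter_subset_left
  have hGδ : IsGδ E := by
    refine IsGδ.inter (IsClosed.isGδ isClosed_closure) ?_
    exact IsGδ.biInter hA fun x _ => IsGδ.iInter fun m => (hUopen x m).isGδ
  -- Baire on the subtype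
  haveI : CompleteSpace (closure B) := isClosed_closure.completeSpace_coe
  haveI : Countable (↑A × ℕ) := by
    haveI := hA.to_subtype; infer_instance
  set V : ↑A × ℕ → Set (closure B) := fun p => Subtype.val ⁻¹' U p.1.1 p.2 with hV
  have hVdense : Dense (⋂ p, V p) := by
    refine dense_iInter_of_isOpen
      (fun p => (hUopen _ _).preimage continuous_subtype_val) (fun p => ?_)
    rw [Metric.dense_iff]
    rintro ⟨c, hc⟩ r hr
    obtain ⟨w, hwB, hwd⟩ := Metric.mem_closure_iff.mp hc (r / 2) (by linarith)
    obtain ⟨v, ⟨hvB, hvU⟩, hvd⟩ := key p.1.1 p.1.2 p.2 w hwB (r / 2) (by linarith)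
    refine ⟨⟨v, subset_closure hvB⟩, ?_, hvU⟩
    rw [Metric.mem_ball, Subtype.dist_eq]
    calc dist v c ≤ dist v w + dist w c := dist_triangle v w c
      _ < r / 2 + r / 2 := by rw [dist_comm w c]; exact add_lt_add hvd hwd
      _ = r := by ring
  refine ⟨E, hEsub, hGδ, ?_, ?_⟩
  · intro c hc
    rw [Metric.mem_closure_iff]
    intro r hr
    obtain ⟨⟨d, hdC⟩, hd1, hd2⟩ :=
      (Metric.dense_iff.mp hVdense ⟨c, hc⟩ r hr)
    refine ⟨d, ⟨hdC, ?_⟩, by simpa [Subtype.dist_eq, dist_comm] using hd1⟩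
    simp only [Set.mem_iInter]
    intro x hx m
    exact Set.mem_iInter.mp hd2 ⟨⟨x, hx⟩, m⟩
  · intro z hz
    refine closure_minimal (fun x hx => ?_) isClosed_closure
    rw [Metric.mem_closure_iff]
    intro r hr
    obtain ⟨m, hm⟩ := exists_nat_one_div_lt hr
    have hzU : z ∈ U x m := by
      have := hz.2
      simp only [Set.mem_iInter] at this
      exact this x hx m
    obtain ⟨n, hn⟩ := Set.mem_iUnion.mp hzU
    refine ⟨T^[n] z, ⟨n, rfl⟩, ?_⟩
    rw [dist_comm]
    calc dist (T^[n] z) x < 1 / (m + 1) := hn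
      _ < r := hm
end

section
/- Let T : X → X be a bounded linear operator on an infinite dimensional complex Banach space X such that the set ⋂_{x∈X} D(x,T) has non-empty interior. Then for every non-zero complex polynomial P, the operator P(T) has dense range. -/
open Filter Topology

variable {X : Type*} [NormedAddCommGroup X] [NormedSpace ℂ X]

/-!
If `T - c` fails to have dense range, Hahn–Banach gives a functional `φ ≠ 0` with `φ ∘ T = c φ`,
so `φ (T^n z) = c^n φ z`. For `‖c‖ ≤ 1` every point of `D(0,T)` lies in `ker φ`, a closed
hyperplane with empty interior. For `‖c‖ > 1` and `φ x ≠ 0`, the values `φ (T^{k_n} u_n)` blow up,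
so `J(x,T) = ∅` and `D(x,T)` is a countable orbit, again with empty interior. Over `ℂ` every
nonzero polynomial is a constant times a product of factors `X - c`, so `P(T)` is a composition of
operators with dense range.
-/

theorem exists_ne_zero_comp_eq_zero_of_not_denseRange {𝕜 E F : Type*} [RCLike 𝕜]
    [NormedAddCommGroup E] [NormedSpace 𝕜 E] [NormedAddCommGroup F] [NormedSpace 𝕜 F]
    {A : E →L[𝕜] F} (h : ¬DenseRange A) : ∃ φ : StrongDual 𝕜 F, φ ≠ 0 ∧ φ.comp A = 0 := by
  set S := (LinearMap.range (A : E →ₗ[𝕜] F)).topologicalClosure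
  have hS : (S : Set F) = closure (Set.range A) := by
    rw [Submodule.topologicalClosure_coe, LinearMap.coe_range, ContinuousLinearMap.coe_coe]
  have : IsClosed (S : Set F) := Submodule.isClosed_topologicalClosure _
  obtain ⟨x, hx⟩ : ∃ x, x ∉ S := by
    simpa only [DenseRange, Dense, not_forall, ← SetLike.mem_coe, hS] using h
  obtain ⟨f, hf⟩ := SeparatingDual.exists_ne_zero (R := 𝕜)
    (mt (Submodule.Quotient.mk_eq_zero S).1 hx)
  refine ⟨f.comp S.mkQL, fun h0 => hf (by simpa using congr($h0 x)), ?_⟩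
  ext z
  have hz : A z ∈ S := Submodule.le_topologicalClosure _ (LinearMap.mem_range_self _ z)
  simp [(Submodule.Quotient.mk_eq_zero S).2 hz]

section Polynomial

open Polynomial

variable {𝕜 E : Type*} [Field 𝕜] [AddCommGroup E] [TopologicalSpace E]
  [Module 𝕜 E] [IsTopologicalAddGroup E] [ContinuousConstSMul 𝕜 E]

theorem denseRange_aeval_C {a : 𝕜} (ha : a ≠ 0) (T : E →L[𝕜] E) : DenseRange (aeval T (C a)) :=
  Function.Surjective.denseRange fun y => ⟨a⁻¹ • y, by simp [smul_smul, ha]⟩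

theorem DenseRange.aeval_mul {T : E →L[𝕜] E} {p q : 𝕜[X]} (hp : DenseRange (aeval T p))
    (hq : DenseRange (aeval T q)) : DenseRange (aeval T (p * q)) := by
  rw [map_mul]
  exact hp.comp hq (aeval T p).continuous

theorem denseRange_aeval_of_forall_denseRange_sub [IsAlgClosed 𝕜] {T : E →L[𝕜] E}
    (hT : ∀ c : 𝕜, DenseRange (T - algebraMap 𝕜 (E →L[𝕜] E) c)) {P : 𝕜[X]} (hP : P ≠ 0) :
    DenseRange (aeval T P) := by
  rw [← C_leadingCoeff_mul_prod_multiset_X_sub_C (IsAlgClosed.card_roots_eq_natDegree (p := P))]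
  refine (denseRange_aeval_C (leadingCoeff_ne_zero.2 hP) T).aeval_mul ?_
  refine Multiset.prod_induction (fun p => DenseRange (aeval T p)) _
    (fun _ _ => DenseRange.aeval_mul) ?_ ?_
  · simpa using denseRange_id
  · simp only [Multiset.mem_map]
    rintro _ ⟨c, -, rfl⟩
    simpa using hT c

end Polynomial

section Eigenfunctional

variable {T : X →L[ℂ] X} {φ : StrongDual ℂ X} {c : ℂ}

theorem apply_pow_apply_of_comp_eq_smul (h : φ.comp T = c • φ) (n : ℕ) (z : X) :
    φ ((T ^ n) z) = c ^ n * φ z := by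
  induction n generalizing z with
  | zero => simp
  | succ n ih =>
    have hz : φ (T z) = c * φ z := by simpa using congr($h z)
    rw [pow_succ, mul_apply_eq_comp, ih, hz, pow_succ, mul_assoc]

theorem dSet_zero_subset_ker (h : φ.comp T = c • φ) (hc : ‖c‖ ≤ 1) :
    dSet T 0 ⊆ LinearMap.ker (φ : X →ₗ[ℂ] ℂ) := by
  rintro y (⟨n, rfl⟩ | ⟨k, -, -, u, hu, hTu⟩)
  · simp
  have hφu : Tendsto (fun n => φ (u n)) atTop (𝓝 0) :=
    (φ.continuous.tendsto' 0 0 (map_zero φ)).comp hu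
  have hφTu : Tendsto (fun n => φ ((T ^ k n) (u n))) atTop (𝓝 0) := by
    refine squeeze_zero_norm (fun n => ?_) (by simpa using hφu.norm)
    rw [apply_pow_apply_of_comp_eq_smul h, norm_mul, norm_pow]
    exact mul_le_of_le_one_left (norm_nonneg _) (pow_le_one₀ (norm_nonneg _) hc)
  rw [SetLike.mem_coe, LinearMap.mem_ker]
  exact tendsto_nhds_unique ((φ.continuous.tendsto y).comp hTu) hφTu

theorem eq_zero_of_comp_eq_smul_of_norm_le_one (h : φ.comp T = c • φ) (hc : ‖c‖ ≤ 1)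
    (hint : (interior (dSet T 0)).Nonempty) : φ = 0 := by
  have hker := Submodule.eq_top_of_nonempty_interior' _
    (hint.mono (interior_mono (dSet_zero_subset_ker h hc)))
  exact ContinuousLinearMap.coe_injective (LinearMap.ker_eq_top.1 hker)

theorem jSet_eq_empty_of_comp_eq_smul (h : φ.comp T = c • φ) (hc : 1 < ‖c‖) {x : X}
    (hx : φ x ≠ 0) : jSet T x = ∅ := by
  refine Set.eq_empty_of_forall_notMem ?_
  rintro y ⟨k, hk, -, u, hu, hTu⟩
  have hc₀ : 0 < ‖c‖ := one_pos.trans hc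
  have hdecay : Tendsto (fun n => c⁻¹ ^ k n) atTop (𝓝 0) :=
    (tendsto_pow_atTop_nhds_zero_of_norm_lt_one (by rwa [norm_inv, inv_lt_one₀ hc₀])).comp
      hk.tendsto_atTop
  have hφu : Tendsto (fun n => φ (u n)) atTop (𝓝 0) := by
    have := hdecay.mul ((φ.continuous.tendsto y).comp hTu)
    simpa only [Function.comp_def, apply_pow_apply_of_comp_eq_smul h, inv_pow,
      inv_mul_cancel_left₀ (pow_ne_zero _ (norm_pos_iff.1 hc₀)), zero_mul] using this
  exact hx (tendsto_nhds_unique ((φ.continuous.tendsto x).comp hu) hφu)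

theorem interior_dSet_eq_empty_of_comp_eq_smul (h : φ.comp T = c • φ) (hc : 1 < ‖c‖) {x : X}
    (hx : φ x ≠ 0) : interior (dSet T x) = ∅ := by
  have : Nontrivial X := ⟨⟨x, 0, fun h0 => hx (by simp [h0])⟩⟩
  rw [dSet, jSet_eq_empty_of_comp_eq_smul h hc hx, Set.union_empty]
  exact interior_eq_empty_iff_dense_compl.2 ((Set.countable_range _).dense_compl ℂ)

end Eigenfunctional

theorem denseRange_sub_algebraMap_of_nonempty_interior {T : X →L[ℂ] X}
    (hint : (interior (⋂ x : X, dSet T x)).Nonempty) (c : ℂ) :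
    DenseRange (T - algebraMap ℂ (X →L[ℂ] X) c) := by
  by_contra hdense
  obtain ⟨φ, hφ0, hφ⟩ := exists_ne_zero_comp_eq_zero_of_not_denseRange hdense
  have h : φ.comp T = c • φ := by
    ext z
    simpa [sub_eq_zero] using congr($hφ z)
  have hD : ∀ x, (interior (dSet T x)).Nonempty := fun x =>
    hint.mono (interior_mono (Set.iInter_subset _ x))
  rcases le_or_gt ‖c‖ 1 with hc | hc
  · exact hφ0 (eq_zero_of_comp_eq_smul_of_norm_le_one h hc (hD 0))
  · obtain ⟨x, hx⟩ := DFunLike.ne_iff.1 hφ0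
    exact (hD x).ne_empty (interior_dSet_eq_empty_of_comp_eq_smul h hc hx)

theorem denseRange_poly_of_dSet_interior_general
    (T : X →L[ℂ] X) (hint : (interior (⋂ x : X, dSet T x)).Nonempty)
    (P : Polynomial ℂ) (hP : P ≠ 0) :
    DenseRange (Polynomial.aeval T P : X →L[ℂ] X) :=
  denseRange_aeval_of_forall_denseRange_sub (denseRange_sub_algebraMap_of_nonempty_interior hint) hP

theorem denseRange_poly_of_dSet_interior [CompleteSpace X]
    (hinf : ¬ FiniteDimensional ℂ X)
    (T : X →L[ℂ] X) (hint : (interior (⋂ x : X, dSet T x)).Nonempty)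
    (P : Polynomial ℂ) (hP : P ≠ 0) :
    DenseRange (Polynomial.aeval T P : X →L[ℂ] X) :=
  denseRange_poly_of_dSet_interior_general T hint P hP
end

section
/- Let T : X → X be a bounded linear operator on an infinite dimensional Banach space such that T is coarsely topologically mixing on an open cone C (for some d > 0). Then T is topologically mixing on X. -/
open Filter Topology

variable {X : Type*} [NormedAddCommGroup X] [NormedSpace ℂ X]

/-!
Call `y` a mixing limit of `x` if, for all large `n`, `T ^ n` maps points arbitrarily close to
`x` arbitrarily close to `y`. By linearity of `T ^ n` such pairs are closed under linear
combinations, and a fixed coarseness that is invariant under rescaling can be scaled away.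
Since `C` is a cone, coarse mixing on `C` therefore makes every point of `C` a mixing limit of
`0`, and a subspace with interior is everything. Pushing `x` coarsely to some `c ∈ C` and
subtracting an exact approximation of `c` from `0` pushes `x` coarsely to `0`, hence exactly after
rescaling. Adding up, every `y` is a mixing limit of every `x`, which is topological mixing.
-/

section MixingLimits

variable {𝕜 E : Type*} [NormedField 𝕜] [NormedAddCommGroup E] [NormedSpace 𝕜 E]

def IsCoarseMixingLimit (T : E →L[𝕜] E) (x y : E) (e : ℝ) : Prop :=
  ∀ ρ > (0 : ℝ), ∀ᶠ n : ℕ in atTop, ((T ^ n) '' Metric.ball x ρ ∩ Metric.ball y e).Nonempty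

def IsMixingLimit (T : E →L[𝕜] E) (x y : E) : Prop :=
  ∀ e > (0 : ℝ), IsCoarseMixingLimit T x y e

variable {T : E →L[𝕜] E} {x y x₁ x₂ y₁ y₂ : E} {e e₁ e₂ : ℝ}

theorem IsCoarseMixingLimit.mono (h : IsCoarseMixingLimit T x y e₁) (he : e₁ ≤ e₂) :
    IsCoarseMixingLimit T x y e₂ := fun ρ hρ =>
  (h ρ hρ).mono fun _ hn => hn.mono <| Set.inter_subset_inter_right _ (Metric.ball_subset_ball he)

theorem IsCoarseMixingLimit.add (h₁ : IsCoarseMixingLimit T x₁ y₁ e₁)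
    (h₂ : IsCoarseMixingLimit T x₂ y₂ e₂) :
    IsCoarseMixingLimit T (x₁ + x₂) (y₁ + y₂) (e₁ + e₂) := by
  intro ρ hρ
  filter_upwards [h₁ (ρ / 2) (half_pos hρ), h₂ (ρ / 2) (half_pos hρ)]
    with n ⟨_, ⟨w₁, hw₁, rfl⟩, hv₁⟩ ⟨_, ⟨w₂, hw₂, rfl⟩, hv₂⟩
  refine ⟨_, ⟨w₁ + w₂, ?_, rfl⟩, ?_⟩
  · rw [Metric.mem_ball] at hw₁ hw₂ ⊢
    linarith [dist_add_add_le w₁ w₂ x₁ x₂]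
  · rw [Metric.mem_ball] at hv₁ hv₂ ⊢
    linarith [map_add (T ^ n) w₁ w₂ ▸ dist_add_add_le ((T ^ n) w₁) ((T ^ n) w₂) y₁ y₂]

theorem IsCoarseMixingLimit.smul (h : IsCoarseMixingLimit T x y e) {a : 𝕜} (ha : a ≠ 0) :
    IsCoarseMixingLimit T (a • x) (a • y) (‖a‖ * e) := by
  intro ρ hρ
  have ha' : 0 < ‖a‖ := norm_pos_iff.2 ha
  filter_upwards [h (ρ / ‖a‖) (div_pos hρ ha')] with n ⟨_, ⟨w, hw, rfl⟩, hv⟩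
  refine ⟨_, ⟨a • w, ?_, rfl⟩, ?_⟩
  · rw [Metric.mem_ball, dist_smul₀, ← lt_div_iff₀' ha']
    exact hw
  · rw [Metric.mem_ball, map_smul, dist_smul₀]
    exact mul_lt_mul_of_pos_left hv ha'

theorem IsCoarseMixingLimit.sub (h₁ : IsCoarseMixingLimit T x₁ y₁ e₁)
    (h₂ : IsCoarseMixingLimit T x₂ y₂ e₂) :
    IsCoarseMixingLimit T (x₁ - x₂) (y₁ - y₂) (e₁ + e₂) := by
  simpa [sub_eq_add_neg] using h₁.add (h₂.smul (neg_ne_zero.2 one_ne_zero))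

theorem isMixingLimit_zero_zero : IsMixingLimit T 0 0 := fun _ he _ hρ =>
  Eventually.of_forall fun _ =>
    ⟨0, ⟨0, Metric.mem_ball_self hρ, map_zero _⟩, Metric.mem_ball_self he⟩

theorem IsMixingLimit.add (h₁ : IsMixingLimit T x₁ y₁) (h₂ : IsMixingLimit T x₂ y₂) :
    IsMixingLimit T (x₁ + x₂) (y₁ + y₂) := fun e he =>
  add_halves e ▸ (h₁ (e / 2) (half_pos he)).add (h₂ (e / 2) (half_pos he))

theorem IsMixingLimit.smul (h : IsMixingLimit T x y) (a : 𝕜) :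
    IsMixingLimit T (a • x) (a • y) := by
  rcases eq_or_ne a 0 with rfl | ha
  · simpa using isMixingLimit_zero_zero
  intro e he
  have ha' : 0 < ‖a‖ := norm_pos_iff.2 ha
  simpa [mul_div_cancel₀ e ha'.ne'] using (h (e / ‖a‖) (div_pos he ha')).smul ha

variable (T) in
def mixingLimitsOfZero : Submodule 𝕜 E where
  carrier := {y | IsMixingLimit T 0 y}
  zero_mem' := isMixingLimit_zero_zero
  add_mem' h₁ h₂ := by simpa using IsMixingLimit.add h₁ h₂
  smul_mem' a _ h := by simpa using IsMixingLimit.smul h a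

theorem IsMixingLimit.eventually_image_inter_nonempty (h : IsMixingLimit T x y) {U V : Set E}
    (hU : U ∈ 𝓝 x) (hV : V ∈ 𝓝 y) : ∀ᶠ n : ℕ in atTop, ((T ^ n) '' U ∩ V).Nonempty := by
  obtain ⟨ρ, hρ, hρU⟩ := Metric.mem_nhds_iff.1 hU
  obtain ⟨e, he, heV⟩ := Metric.mem_nhds_iff.1 hV
  exact (h e he ρ hρ).mono fun _ hn =>
    hn.mono (Set.inter_subset_inter (Set.image_mono hρU) heV)

end MixingLimits

section Cone

variable {T : X →L[ℂ] X} {C : Set X} {x y : X} {D : ℝ}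

theorem isMixingLimit_of_forall_isCoarseMixingLimit_inv_smul
    (h : ∀ t : ℝ, 0 < t → IsCoarseMixingLimit T ((t : ℂ)⁻¹ • x) ((t : ℂ)⁻¹ • y) D) :
    IsMixingLimit T x y := by
  intro e he
  obtain ⟨t, ht, hDt⟩ := exists_pos_mul_lt he D
  have ht' : (t : ℂ) ≠ 0 := Complex.ofReal_ne_zero.2 ht.ne'
  have hscaled := (h t ht).smul ht'
  rw [smul_inv_smul₀ ht', smul_inv_smul₀ ht', Complex.norm_real, Real.norm_of_nonneg ht.le]
    at hscaled
  exact hscaled.mono (by linarith)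

theorem isMixingLimit_zero_of_mem_cone (hC : IsOpenCone C)
    (hcoarse : ∀ c ∈ C, IsCoarseMixingLimit T 0 c D) {c : X} (hc : c ∈ C) :
    IsMixingLimit T 0 c :=
  isMixingLimit_of_forall_isCoarseMixingLimit_inv_smul fun t ht => by
    simpa using hcoarse _ (hC.2.2 c hc t⁻¹ (inv_pos.2 ht))

theorem mixingLimitsOfZero_eq_top (hC : IsOpenCone C)
    (hcoarse : ∀ c ∈ C, IsCoarseMixingLimit T 0 c D) : mixingLimitsOfZero T = ⊤ :=
  (mixingLimitsOfZero T).eq_top_of_nonempty_interior' <|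
    hC.2.1.mono <| interior_maximal (fun _ hc => isMixingLimit_zero_of_mem_cone hC hcoarse hc) hC.1

theorem isMixingLimit_of_coarse_on_cone (hC : IsOpenCone C)
    (hcoarse : ∀ x, ∀ c ∈ C, IsCoarseMixingLimit T x c D) (x y : X) :
    IsMixingLimit T x y := by
  have hzero (y : X) : IsMixingLimit T 0 y := by
    change y ∈ mixingLimitsOfZero T
    rw [mixingLimitsOfZero_eq_top hC (hcoarse 0)]
    trivial
  obtain ⟨c, hc⟩ := hC.2.1
  have hx : IsMixingLimit T x 0 := isMixingLimit_of_forall_isCoarseMixingLimit_inv_smul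
    fun t _ => by simpa using (hcoarse ((t : ℂ)⁻¹ • x) c hc).sub (hzero c 1 one_pos)
  simpa using hx.add (hzero y)

end Cone

theorem mixing_of_coarsely_mixing_on_cone_general
    (T : X →L[ℂ] X) (C : Set X) (hC : IsOpenCone C) (d : ℝ)
    (h : ∀ U : Set X, IsOpen U → U.Nonempty → ∀ x ∈ C,
      ∃ N : ℕ, ∀ n ≥ N, ((T ^ n) '' U ∩ Metric.ball x d).Nonempty) :
    ∀ U V : Set X, IsOpen U → U.Nonempty → IsOpen V → V.Nonempty →
      ∃ N : ℕ, ∀ n ≥ N, ((T ^ n) '' U ∩ V).Nonempty := by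
  intro U V hU ⟨x, hx⟩ hV ⟨y, hy⟩
  have hcoarse (z c : X) (hc : c ∈ C) : IsCoarseMixingLimit T z c d := fun ρ hρ =>
    eventually_atTop.2 (h _ Metric.isOpen_ball (Metric.nonempty_ball.2 hρ) c hc)
  exact eventually_atTop.1 ((isMixingLimit_of_coarse_on_cone hC hcoarse x y)
    |>.eventually_image_inter_nonempty (hU.mem_nhds hx) (hV.mem_nhds hy))

theorem mixing_of_coarsely_mixing_on_cone [CompleteSpace X]
    (hinf : ¬ FiniteDimensional ℂ X)
    (T : X →L[ℂ] X) (C : Set X) (hC : IsOpenCone C) (d : ℝ) (hd : 0 < d)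
    (h : ∀ U : Set X, IsOpen U → U.Nonempty → ∀ x ∈ C,
      ∃ N : ℕ, ∀ n ≥ N, ((T ^ n) '' U ∩ Metric.ball x d).Nonempty) :
    ∀ U V : Set X, IsOpen U → U.Nonempty → IsOpen V → V.Nonempty →
      ∃ N : ℕ, ∀ n ≥ N, ((T ^ n) '' U ∩ V).Nonempty :=
  mixing_of_coarsely_mixing_on_cone_general T C hC d h
end

section
/- Let T : X → X be a bounded linear operator on a Banach space X. If 0 ∈ J^{mix}(x,T) for every x ∈ X and J^{mix}(0,T) = X, then J^{mix}(x,T) = X for every x ∈ X. -/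
open Filter Topology

variable {X : Type*} [NormedAddCommGroup X] [NormedSpace ℂ X]

theorem jMix_eq_univ_of_zero_mem [CompleteSpace X]
    (T : X →L[ℂ] X) (h0 : ∀ x : X, (0 : X) ∈ jMix T x)
    (hz : jMix T 0 = Set.univ) :
    ∀ x : X, jMix T x = Set.univ := by
  intro x
  ext y
  simp only [Set.mem_univ, iff_true]
  obtain ⟨u, hu, hTu⟩ := h0 x
  have hy : y ∈ jMix T 0 := hz ▸ Set.mem_univ y
  obtain ⟨v, hv, hTv⟩ := hy
  refine ⟨fun n => u n + v n, by simpa using hu.add hv, ?_⟩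
  have := hTu.add hTv
  simpa [map_add] using this
end

section
/- Every backward unilateral weighted shift T on ℓ²(ℕ) that is coarsely J-class on an open cone C ⊆ ℓ²(ℕ) (i.e., C ⊆ J(x,T,d) for some x and d > 0) satisfies C ⊆ J(0,T). -/
/-!
Since `C` is a cone, `r • y ∈ J(x, T, d)` for every `r > 0`. Dividing an approximant `u ≈ x` with
`‖T^k u - r • y‖ < d` by `r` gives a vector of norm at most about `‖x‖ / r` whose `k`-th iterate lies
within `d / r` of `y`. Letting `r → ∞` and extracting a diagonal sequence puts `y` in `J(0, T)`.
-/

open Filter Topology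

/-- The extended limit set `J(x,T)` on `ℓ²(ℕ)`. -/
def jSetL2 (T : lp (fun _ : ℕ => ℂ) 2 →L[ℂ] lp (fun _ : ℕ => ℂ) 2)
    (x : lp (fun _ : ℕ => ℂ) 2) : Set (lp (fun _ : ℕ => ℂ) 2) :=
  {y | ∃ k : ℕ → ℕ, StrictMono k ∧ (∀ n, 0 < k n) ∧
    ∃ u : ℕ → lp (fun _ : ℕ => ℂ) 2, Tendsto u atTop (𝓝 x) ∧
      Tendsto (fun n => (T ^ k n) (u n)) atTop (𝓝 y)}

/-- The coarse extended limit set `J(x,T,d)` on `ℓ²(ℕ)`. -/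
def jCoarseL2 (T : lp (fun _ : ℕ => ℂ) 2 →L[ℂ] lp (fun _ : ℕ => ℂ) 2)
    (x : lp (fun _ : ℕ => ℂ) 2) (d : ℝ) : Set (lp (fun _ : ℕ => ℂ) 2) :=
  {y | ∃ k : ℕ → ℕ, StrictMono k ∧ (∀ n, 0 < k n) ∧
    ∃ u : ℕ → lp (fun _ : ℕ => ℂ) 2, Tendsto u atTop (𝓝 x) ∧
      ∀ n, ‖(T ^ k n) (u n) - y‖ < d}

/-- Open cone in `ℓ²(ℕ)`. -/
def IsOpenConeL2 (C : Set (lp (fun _ : ℕ => ℂ) 2)) : Prop :=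
  IsOpen C ∧ C.Nonempty ∧ ∀ x ∈ C, ∀ r : ℝ, 0 < r → (r : ℂ) • x ∈ C

local notation "ℓ²" => lp (fun _ : ℕ => ℂ) 2

theorem exists_strictMono_tendsto_of_frequently {X Y : Type*} [PseudoMetricSpace X]
    [PseudoMetricSpace Y] (f : ℕ → X → Y) {x : X} {y : Y}
    (h : ∀ ε > 0, ∃ᶠ k in atTop, ∃ u, dist u x < ε ∧ dist (f k u) y < ε) :
    ∃ k : ℕ → ℕ, StrictMono k ∧ (∀ n, 0 < k n) ∧ ∃ u : ℕ → X,
      Tendsto u atTop (𝓝 x) ∧ Tendsto (fun n => f (k n) (u n)) atTop (𝓝 y) := by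
  obtain ⟨k, hk, hP⟩ := extraction_forall_of_frequently fun n : ℕ =>
    (h (1 / ((n : ℝ) + 1)) Nat.one_div_pos_of_nat).and_eventually (eventually_gt_atTop 0)
  choose u hux huy using fun n => (hP n).1
  have hbound := tendsto_one_div_add_atTop_nhds_zero_nat (𝕜 := ℝ)
  refine ⟨k, hk, fun n => (hP n).2, u, ?_, ?_⟩
  · exact tendsto_iff_dist_tendsto_zero.2
      (squeeze_zero (fun _ => dist_nonneg) (fun n => (hux n).le) hbound)
  · exact tendsto_iff_dist_tendsto_zero.2
      (squeeze_zero (fun _ => dist_nonneg) (fun n => (huy n).le) hbound)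

theorem ContinuousLinearMap.norm_map_inv_smul_sub_lt {𝕜 E F : Type*} [NormedField 𝕜]
    [SeminormedAddCommGroup E] [SeminormedAddCommGroup F] [NormedSpace 𝕜 E] [NormedSpace 𝕜 F]
    (L : E →L[𝕜] F) {c : 𝕜} (hc : c ≠ 0) {u : E} {y : F} {d : ℝ}
    (h : ‖L u - c • y‖ < d) : ‖L (c⁻¹ • u) - y‖ < d / ‖c‖ := by
  have hscale : L (c⁻¹ • u) - y = c⁻¹ • (L u - c • y) := by
    rw [map_smul, smul_sub, smul_smul, inv_mul_cancel₀ hc, one_smul]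
  rw [hscale, norm_smul, norm_inv, inv_mul_eq_div]
  exact div_lt_div_of_pos_right h (norm_pos_iff.2 hc)

theorem frequently_exists_norm_lt_of_smul_mem_jCoarseL2 {T : ℓ² →L[ℂ] ℓ²} {x y : ℓ²} {d r : ℝ}
    (hr : 0 < r) (h : (r : ℂ) • y ∈ jCoarseL2 T x d) :
    ∃ᶠ K in atTop, ∃ v : ℓ², ‖v‖ < (‖x‖ + 1) / r ∧ ‖(T ^ K) v - y‖ < d / r := by
  obtain ⟨k, hk, -, u, hu, hTu⟩ := h
  have hr' : (r : ℂ) ≠ 0 := by exact_mod_cast hr.ne'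
  have hnorm : ‖(r : ℂ)‖ = r := by rw [Complex.norm_real, Real.norm_of_nonneg hr.le]
  have hnear : ∀ᶠ n in atTop, ‖u n‖ < ‖x‖ + 1 :=
    hu.norm.eventually (gt_mem_nhds (lt_add_one _))
  refine hk.tendsto_atTop.frequently (hnear.frequently.mono fun n hn => ⟨(r : ℂ)⁻¹ • u n, ?_, ?_⟩)
  · rw [norm_smul, norm_inv, hnorm, inv_mul_eq_div]
    exact div_lt_div_of_pos_right hn hr
  · simpa only [hnorm] using (T ^ k n).norm_map_inv_smul_sub_lt hr' (hTu n)

theorem mem_jSetL2_zero_of_forall_smul_mem_jCoarseL2 {T : ℓ² →L[ℂ] ℓ²} {x y : ℓ²} {d : ℝ}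
    (h : ∀ r : ℝ, 0 < r → (r : ℂ) • y ∈ jCoarseL2 T x d) : y ∈ jSetL2 T 0 := by
  refine exists_strictMono_tendsto_of_frequently (fun k => ⇑(T ^ k)) fun ε hε => ?_
  have hsmall : ∀ a : ℝ, ∀ᶠ r : ℝ in atTop, a / r < ε := fun a =>
    (tendsto_const_nhds.div_atTop tendsto_id).eventually (gt_mem_nhds hε)
  obtain ⟨r, hr, hx, hd⟩ := ((eventually_gt_atTop 0).and ((hsmall _).and (hsmall d))).exists
  refine (frequently_exists_norm_lt_of_smul_mem_jCoarseL2 hr (h r hr)).mono ?_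
  rintro K ⟨v, hv, hTv⟩
  exact ⟨v, by rw [dist_zero_right]; exact hv.trans hx, by rw [dist_eq_norm]; exact hTv.trans hd⟩

theorem coarsely_jClass_backward_shift_subset_jSet_zero_general
    (T : lp (fun _ : ℕ => ℂ) 2 →L[ℂ] lp (fun _ : ℕ => ℂ) 2)
    (x : lp (fun _ : ℕ => ℂ) 2) (d : ℝ)
    (C : Set (lp (fun _ : ℕ => ℂ) 2)) (hC : IsOpenConeL2 C)
    (hJ : C ⊆ jCoarseL2 T x d) :
    C ⊆ jSetL2 T 0 := fun y hy =>
  mem_jSetL2_zero_of_forall_smul_mem_jCoarseL2 fun r hr => hJ (hC.2.2 y hy r hr)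

theorem coarsely_jClass_backward_shift_subset_jSet_zero
    (T : lp (fun _ : ℕ => ℂ) 2 →L[ℂ] lp (fun _ : ℕ => ℂ) 2)
    (w : ℕ → ℝ) (hw : ∀ n, 0 < w n)
    (hT : ∀ (a : lp (fun _ : ℕ => ℂ) 2) (n : ℕ), (T a) n = (w (n + 1) : ℂ) * a (n + 1))
    (x : lp (fun _ : ℕ => ℂ) 2) (d : ℝ) (hd : 0 < d)
    (C : Set (lp (fun _ : ℕ => ℂ) 2)) (hC : IsOpenConeL2 C)
    (hJ : C ⊆ jCoarseL2 T x d) :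
    C ⊆ jSetL2 T 0 :=
  coarsely_jClass_backward_shift_subset_jSet_zero_general T x d C hC hJ
end

section
/- Let T : X → X be a bounded linear operator on a complex Banach space with σ(T) ⊆ {λ : |λ| > 1}. Then J(x,T,d) = ∅ for every non-zero x ∈ X and every d > 0, while J(0,T,d) = J^{mix}(0,T) = X. -/
open Filter Topology

variable {X : Type*} [NormedAddCommGroup X] [NormedSpace ℂ X]

section Aux
open Filter Topology ENNReal

/-- If the spectral radius of `a` is less than 1, then `‖a ^ n‖ → 0`. -/
lemma aux_tendsto_norm_pow_of_spectralRadius_lt_one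
    {A : Type*} [NormedRing A] [NormedAlgebra ℂ A] [CompleteSpace A] (a : A)
    (h : spectralRadius ℂ a < 1) :
    Tendsto (fun n : ℕ => ‖a ^ n‖) atTop (𝓝 0) := by
  obtain ⟨c, hc1, hc2⟩ := ENNReal.lt_iff_exists_nnreal_btwn.mp h
  have hgel := spectrum.pow_nnnorm_pow_one_div_tendsto_nhds_spectralRadius a
  have hev : ∀ᶠ n : ℕ in atTop, (‖a ^ n‖₊ : ℝ≥0∞) ^ (1 / (n : ℝ)) < (c : ℝ≥0∞) :=
    hgel.eventually_lt_const hc1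
  have hc2' : (c : ℝ) < 1 := by exact_mod_cast hc2
  have hcnn : (0 : ℝ) ≤ (c : ℝ) := c.coe_nonneg
  have hbound : ∀ᶠ n : ℕ in atTop, ‖a ^ n‖ ≤ (c : ℝ) ^ n := by
    filter_upwards [hev, eventually_ge_atTop 1] with n hn hn1
    have hne : (n : ℝ) ≠ 0 := by positivity
    have h1 : ((‖a ^ n‖₊ : ℝ≥0∞) ^ (1 / (n : ℝ))) ^ (n : ℝ) ≤ ((c : ℝ≥0∞)) ^ (n : ℝ) :=
      ENNReal.rpow_le_rpow hn.le (by positivity)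
    rw [← ENNReal.rpow_mul, one_div, inv_mul_cancel₀ hne, ENNReal.rpow_one,
      ENNReal.rpow_natCast, ← ENNReal.coe_pow, ENNReal.coe_le_coe] at h1
    exact_mod_cast h1
  exact squeeze_zero' (Eventually.of_forall fun n => norm_nonneg _) hbound
    (tendsto_pow_atTop_nhds_zero_of_lt_one hcnn hc2')
end Aux


theorem jCoarse_of_spectrum_outside_disk [CompleteSpace X]
    (T : X →L[ℂ] X) (hspec : spectrum ℂ T ⊆ {z : ℂ | 1 < ‖z‖}) :
    (∀ x : X, x ≠ 0 → ∀ d : ℝ, 0 < d → jCoarse T x d = ∅) ∧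
    (∀ d : ℝ, 0 < d → jCoarse T 0 d = Set.univ) ∧
    jMix T 0 = Set.univ := by
  have h0 : (0 : ℂ) ∉ spectrum ℂ T := fun h => by have := hspec h; norm_num at this
  have hT : IsUnit T := (spectrum.zero_notMem_iff (R := ℂ)).mp h0
  obtain ⟨U, hU⟩ := hT
  set S : X →L[ℂ] X := ↑U⁻¹ with hS
  have hST : ∀ (m : ℕ) (v : X), (S ^ m) ((T ^ m) v) = v := by
    intro m v
    have h1 : (S ^ m) * (T ^ m) = 1 := by
      rw [hS, ← hU, ← Units.val_pow_eq_pow_val, ← Units.val_pow_eq_pow_val,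
        ← Units.val_mul, inv_pow]
      simp
    calc (S ^ m) ((T ^ m) v) = ((S ^ m) * (T ^ m)) v := rfl
      _ = v := by rw [h1]; rfl
  have hTS : ∀ (m : ℕ) (v : X), (T ^ m) ((S ^ m) v) = v := by
    intro m v
    have h1 : (T ^ m) * (S ^ m) = 1 := by
      rw [hS, ← hU, ← Units.val_pow_eq_pow_val, ← Units.val_pow_eq_pow_val,
        ← Units.val_mul, inv_pow]
      simp
    calc (T ^ m) ((S ^ m) v) = ((T ^ m) * (S ^ m)) v := rfl
      _ = v := by rw [h1]; rfl
  have hσS : ∀ z ∈ spectrum ℂ S, ‖z‖₊ < 1 := by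
    intro z hz
    have hz0 : z ≠ 0 := by
      rintro rfl
      exact spectrum.zero_notMem ℂ (U⁻¹).isUnit hz
    lift z to ℂˣ using isUnit_iff_ne_zero.mpr hz0 with zu
    have hinv : (↑zu⁻¹ : ℂ) ∈ spectrum ℂ (↑(U⁻¹)⁻¹ : X →L[ℂ] X) :=
      spectrum.inv_mem_iff.mp hz
    rw [inv_inv, hU] at hinv
    have h1 : 1 < ‖(↑zu⁻¹ : ℂ)‖ := hspec hinv
    rw [Units.val_inv_eq_inv_val, norm_inv] at h1
    have hz0' : (0:ℝ) < ‖(zu : ℂ)‖ := norm_pos_iff.mpr hz0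
    have : ‖(zu : ℂ)‖ < 1 := by
      by_contra hcon
      push_neg at hcon
      have : ‖(zu : ℂ)‖⁻¹ ≤ 1 := by
        rw [inv_le_one_iff₀]; right; exact hcon
      linarith
    exact_mod_cast this
  have hrad : spectralRadius ℂ S < 1 := by
    rcases (spectrum ℂ S).eq_empty_or_nonempty with he | hne
    · rw [spectralRadius]
      simp [he]
    · have := spectrum.spectralRadius_lt_of_forall_lt_of_nonempty hne (r := 1) hσS
      simpa using this
  have hS0 : Tendsto (fun n : ℕ => ‖S ^ n‖) atTop (𝓝 0) :=
    aux_tendsto_norm_pow_of_spectralRadius_lt_one S hrad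
  refine ⟨?_, ?_, ?_⟩
  · intro x hx d hd
    ext y
    simp only [Set.mem_empty_iff_false, iff_false]
    rintro ⟨k, hk, hkpos, u, hu, hnear⟩
    have hku : Tendsto (fun n => ‖S ^ k n‖) atTop (𝓝 0) := hS0.comp hk.tendsto_atTop
    have hb : ∀ n, ‖u n‖ ≤ ‖S ^ k n‖ * (‖y‖ + d) := by
      intro n
      have h1 : ‖(T ^ k n) (u n)‖ ≤ ‖y‖ + d := by
        have h2 := hnear n
        calc ‖(T ^ k n) (u n)‖ = ‖((T ^ k n) (u n) - y) + y‖ := by rw [sub_add_cancel]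
          _ ≤ ‖(T ^ k n) (u n) - y‖ + ‖y‖ := norm_add_le _ _
          _ ≤ ‖y‖ + d := by linarith
      calc ‖u n‖ = ‖(S ^ k n) ((T ^ k n) (u n))‖ := by rw [hST]
        _ ≤ ‖S ^ k n‖ * ‖(T ^ k n) (u n)‖ := (S ^ k n).le_opNorm _
        _ ≤ ‖S ^ k n‖ * (‖y‖ + d) :=
            mul_le_mul_of_nonneg_left h1 (norm_nonneg _)
    have hu0 : Tendsto u atTop (𝓝 0) := by
      rw [tendsto_zero_iff_norm_tendsto_zero]
      refine squeeze_zero (fun n => norm_nonneg _) hb ?_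
      simpa using hku.mul_const (‖y‖ + d)
    exact hx (tendsto_nhds_unique hu hu0)
  · intro d hd
    ext y
    simp only [Set.mem_univ, iff_true]
    refine ⟨fun n => n + 1, fun a b h => Nat.add_lt_add_right h 1, fun n => n.succ_pos,
      fun n => (S ^ (n + 1)) y, ?_, ?_⟩
    · rw [tendsto_zero_iff_norm_tendsto_zero]
      refine squeeze_zero (fun n => norm_nonneg _) (fun n => (S ^ (n + 1)).le_opNorm y) ?_
      have := (hS0.comp (tendsto_add_atTop_nat 1)).mul_const ‖y‖
      simpa using this
    · intro n
      rw [hTS]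
      simpa using hd
  · ext y
    simp only [Set.mem_univ, iff_true]
    refine ⟨fun n => (S ^ n) y, ?_, ?_⟩
    · rw [tendsto_zero_iff_norm_tendsto_zero]
      refine squeeze_zero (fun n => norm_nonneg _) (fun n => (S ^ n).le_opNorm y) ?_
      simpa using hS0.mul_const ‖y‖
    · simp only [hTS]
      exact tendsto_const_nhds
end

section
/- Let X be a non-separable Banach space and T : X → X a bounded linear operator of the form T = U + S, where U is power bounded (sup_n ‖U^n‖ < ∞) and S has separable range. Then T cannot be coarsely D-class on any open cone: there exist no non-zero x ∈ X, d > 0, and open cone C with C ⊆ D(x,T,d). -/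
open Filter Topology

variable {X : Type*} [NormedAddCommGroup X] [NormedSpace ℂ X]

theorem no_coarse_dClass_of_powerBounded_plus_separableRange [CompleteSpace X]
    (hsep : ¬ TopologicalSpace.SeparableSpace X)
    (U S T : X →L[ℂ] X) (hT : T = U + S)
    (hU : ∃ M : ℝ, ∀ n : ℕ, ‖U ^ n‖ ≤ M)
    (hS : TopologicalSpace.IsSeparable (Set.range S)) :
    ¬ ∃ x : X, x ≠ 0 ∧ ∃ d : ℝ, 0 < d ∧
      ∃ C : Set X, IsOpenCone C ∧ C ⊆ dCoarse T x d := by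
  rintro ⟨x, -, d, hd, C, ⟨hCopen, ⟨c, hc⟩, hCcone⟩, hCD⟩
  obtain ⟨M, hM⟩ := hU
  have hM0 : 0 ≤ M := le_trans (norm_nonneg _) (hM 0)
  -- the separable set generating our subspace
  set s : Set X := ⋃ j : ℕ, (U ^ j) '' Set.range S with hs
  have hssep : TopologicalSpace.IsSeparable s :=
    TopologicalSpace.IsSeparable.iUnion fun j => hS.image (U ^ j).continuous
  set Y : Submodule ℂ X := (Submodule.span ℂ s).topologicalClosure with hY
  have hYsep : TopologicalSpace.IsSeparable (Y : Set X) := hssep.span.closure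
  have hYclosed : IsClosed (Y : Set X) := Submodule.isClosed_topologicalClosure _
  -- S maps into Y
  have hSY : ∀ w, S w ∈ Y := by
    intro w
    apply Submodule.le_topologicalClosure _
    apply Submodule.subset_span
    exact Set.mem_iUnion.2 ⟨0, by simp⟩
  -- U maps Y into Y
  have hUs : Set.MapsTo U (Submodule.span ℂ s : Set X) (Submodule.span ℂ s : Set X) := by
    intro z hz
    have h1 : U z ∈ (Submodule.span ℂ s).map (U : X →ₗ[ℂ] X) :=
      Submodule.mem_map_of_mem hz
    rw [Submodule.map_span] at h1
    refine Submodule.span_mono ?_ h1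
    rintro _ ⟨w, hw, rfl⟩
    obtain ⟨j, hj⟩ := Set.mem_iUnion.1 hw
    obtain ⟨a, ha, rfl⟩ := hj
    exact Set.mem_iUnion.2 ⟨j + 1, ⟨a, ha, by
      simp [pow_succ', ContinuousLinearMap.mul_apply]⟩⟩
  have hUY : ∀ w ∈ Y, U w ∈ Y := by
    intro w hw
    have : U w ∈ closure (U '' (Submodule.span ℂ s : Set X)) :=
      (map_mem_closure U.continuous hw (Set.mapsTo_image _ _))
    exact closure_mono (Set.image_subset_iff.2 hUs) this
  -- the key algebraic fact
  have key : ∀ (n : ℕ) (w : X), (T ^ n) w - (U ^ n) w ∈ Y := by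
    intro n
    induction n with
    | zero => intro w; simp
    | succ n ih =>
      intro w
      have hexp : (T ^ (n + 1)) w - (U ^ (n + 1)) w
          = U ((T ^ n) w - (U ^ n) w) + S ((T ^ n) w) := by
        rw [pow_succ', pow_succ']
        simp [hT, map_sub]
        abel
      rw [hexp]
      exact Y.add_mem (hUY _ (ih w)) (hSY _)
  set K : ℝ := d + M * (‖x‖ + 1) with hK
  have hKpos : 0 < K := by positivity
  -- every point of the coarse prolongation is within K of Y
  have hclose : ∀ y ∈ dCoarse T x d, ∃ z ∈ Y, ‖y - z‖ ≤ K := by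
    rintro y (⟨n, hn⟩ | ⟨k, hk, hkpos, u, hu, hnorm⟩)
    · refine ⟨(T ^ n) x - (U ^ n) x, key n x, ?_⟩
      have h1 : ‖y - ((T ^ n) x - (U ^ n) x)‖ ≤ ‖(T ^ n) x - y‖ + ‖(U ^ n) x‖ := by
        have : y - ((T ^ n) x - (U ^ n) x) = -((T ^ n) x - y) + (U ^ n) x := by abel
        rw [this]
        exact (norm_add_le _ _).trans (by rw [norm_neg])
      have h2 : ‖(U ^ n) x‖ ≤ M * ‖x‖ :=
        (U ^ n).le_of_opNorm_le (hM n) x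
      have : M * ‖x‖ ≤ M * (‖x‖ + 1) := by nlinarith [norm_nonneg x]
      linarith
    · have hub : ∀ᶠ n in atTop, ‖u n‖ < ‖x‖ + 1 :=
        (hu.norm).eventually_lt_const (by linarith)
      obtain ⟨n, hn⟩ := hub.exists
      refine ⟨(T ^ k n) (u n) - (U ^ k n) (u n), key (k n) (u n), ?_⟩
      have h1 : ‖y - ((T ^ k n) (u n) - (U ^ k n) (u n))‖
          ≤ ‖(T ^ k n) (u n) - y‖ + ‖(U ^ k n) (u n)‖ := by
        have : y - ((T ^ k n) (u n) - (U ^ k n) (u n))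
            = -((T ^ k n) (u n) - y) + (U ^ k n) (u n) := by abel
        rw [this]
        exact (norm_add_le _ _).trans (by rw [norm_neg])
      have h2 : ‖(U ^ k n) (u n)‖ ≤ M * ‖u n‖ :=
        (U ^ k n).le_of_opNorm_le (hM (k n)) (u n)
      have h3 : M * ‖u n‖ ≤ M * (‖x‖ + 1) := by nlinarith [norm_nonneg (u n), hn.le]
      have := (hnorm n).le
      linarith
  -- the cone is contained in Y
  have hCY : C ⊆ (Y : Set X) := by
    intro w hw
    have : w ∈ closure (Y : Set X) := by
      rw [Metric.mem_closure_iff]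
      intro ε hε
      set r : ℝ := (K + 1) / ε with hr
      have hrpos : 0 < r := by positivity
      obtain ⟨z, hz, hzK⟩ := hclose _ (hCD (hCcone w hw r hrpos))
      refine ⟨((r : ℂ))⁻¹ • z, Y.smul_mem _ hz, ?_⟩
      have heq : w - ((r : ℂ))⁻¹ • z = ((r : ℂ))⁻¹ • ((r : ℂ) • w - z) := by
        rw [smul_sub, inv_smul_smul₀ (by exact_mod_cast hrpos.ne')]
      rw [dist_eq_norm, heq, norm_smul]
      have hnr : ‖((r : ℂ))⁻¹‖ = r⁻¹ := by
        rw [norm_inv, Complex.norm_real, Real.norm_of_nonneg hrpos.le]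
      rw [hnr]
      calc r⁻¹ * ‖(r : ℂ) • w - z‖ ≤ r⁻¹ * K := by
            exact mul_le_mul_of_nonneg_left hzK (by positivity)
        _ < ε := by
            rw [hr]
            rw [div_eq_mul_inv, mul_inv, inv_inv]
            calc (K + 1)⁻¹ * ε * K = ε * (K * (K + 1)⁻¹) := by ring
              _ < ε * 1 := by
                  apply mul_lt_mul_of_pos_left _ hε
                  rw [mul_inv_lt_iff₀ (by positivity)]
                  linarith
              _ = ε := mul_one ε
    rwa [hYclosed.closure_eq] at this
  -- a ball inside the cone
  obtain ⟨ε, hε, hball⟩ := Metric.isOpen_iff.1 hCopen c hc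
  have hballsep : TopologicalSpace.IsSeparable (Metric.ball c ε) :=
    hYsep.mono (hball.trans hCY)
  -- the whole space is separable: contradiction
  apply hsep
  rw [← TopologicalSpace.isSeparable_univ_iff]
  have hcover : (Set.univ : Set X)
      = ⋃ n : ℕ, (fun z : X => (((n : ℝ) + 1 : ℝ) : ℂ) • (z - c)) '' Metric.ball c ε := by
    refine Set.Subset.antisymm ?_ (Set.subset_univ _)
    rintro v -
    obtain ⟨n, hn⟩ := exists_nat_gt (‖v‖ / ε)
    have hn1 : (0 : ℝ) < (n : ℝ) + 1 := by positivity
    refine Set.mem_iUnion.2 ⟨n, ⟨c + ((((n : ℝ) + 1 : ℝ) : ℂ))⁻¹ • v, ?_, ?_⟩⟩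
    · rw [Metric.mem_ball, dist_eq_norm]
      have : c + ((((n : ℝ) + 1 : ℝ) : ℂ))⁻¹ • v - c = ((((n : ℝ) + 1 : ℝ) : ℂ))⁻¹ • v := by abel
      rw [this, norm_smul, norm_inv, Complex.norm_real, Real.norm_of_nonneg hn1.le]
      rw [inv_mul_lt_iff₀ hn1]
      have h1 : ‖v‖ / ε < (n : ℝ) + 1 := hn.trans (by linarith)
      have h2 := (div_lt_iff₀ hε).1 h1
      nlinarith
    · simp only [add_sub_cancel_left]
      rw [smul_inv_smul₀ (by exact_mod_cast hn1.ne')]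
  rw [hcover]
  exact TopologicalSpace.IsSeparable.iUnion fun n =>
    hballsep.image ((continuous_id.sub continuous_const).const_smul _)
end
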